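/- Let A be a finitely generated module over ℤ[t, t⁻¹] presented by a square matrix M with determinant Δ(t) = c₀ ∏ⱼ (t − αⱼ) (factored over an algebraic closure). Fix a positive integer r and regard A as a module over ℤ[s, s⁻¹] via s = t^r. Then the 0th characteristic polynomial (order) of A as a ℤ[s,s⁻¹]-module is c₀^r ∏ⱼ (s − αⱼ^r), up to a unit. -/

import Mathlib

/-- Evaluation of an integral Laurent polynomial at a nonzero complex number. -/
noncomputable def evalC (z : ℂˣ) : LaurentPolynomial ℤ →ₐ[ℤ] ℂ :=
  AddMonoidAlgebra.lift ℤ ℂ ℤ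
    ((Units.coeHom ℂ).comp (zpowersHom ℂˣ z))

/-- The ring homomorphism `ℤ[s, s⁻¹] → ℤ[t, t⁻¹]`, `s ↦ t^r`, along which a
`ℤ[t,t⁻¹]`-module is regarded as a `ℤ[s,s⁻¹]`-module. -/
noncomputable def sigmaHom (r : ℕ) : LaurentPolynomial ℤ →+* LaurentPolynomial ℤ :=
  AddMonoidAlgebra.mapDomainRingHom ℤ (AddMonoidHom.mulLeft (r : ℤ))

open LaurentPolynomial Finsupp

lemma evalC_single (z : ℂˣ) (a : ℤ) (c : ℤ) :
    evalC z (AddMonoidAlgebra.single a c) = (c : ℂ) * (z : ℂ) ^ a := by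
  show evalC z (AddMonoidAlgebra.single a c) = _
  rw [evalC, AddMonoidAlgebra.lift_single]
  simp [zpowersHom_apply, zsmul_eq_mul]

lemma evalC_T (z : ℂˣ) (a : ℤ) : evalC z (T a : LaurentPolynomial ℤ) = (z : ℂ) ^ a := by
  rw [T, evalC_single]; simp

lemma sigmaHom_single (r : ℕ) (a : ℤ) (c : ℤ) :
    sigmaHom r (AddMonoidAlgebra.single a c) = AddMonoidAlgebra.single ((r : ℤ) * a) c := by
  show AddMonoidAlgebra.mapDomain (fun x => (r : ℤ) * x) (AddMonoidAlgebra.single a c) = _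
  rw [AddMonoidAlgebra.mapDomain_single]

lemma evalC_sigmaHom (r : ℕ) (z : ℂˣ) (p : LaurentPolynomial ℤ) :
    evalC z (sigmaHom r p) = evalC (z ^ r) p := by
  induction p using AddMonoidAlgebra.induction_linear with
  | zero => simp
  | add f g hf hg => rw [map_add, map_add, map_add, hf, hg]
  | single a b =>
      rw [sigmaHom_single, evalC_single, evalC_single]
      congr 1
      push_cast
      rw [zpow_mul]
      norm_num

noncomputable def piK (r : ℕ) (k : Fin r) : LaurentPolynomial ℤ →+ LaurentPolynomial ℤ where
  toFun p := p.coeff.sum fun j c =>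
    if j % (r : ℤ) = (k : ℤ) then (AddMonoidAlgebra.single ((j - (k : ℤ)) / (r : ℤ)) c : LaurentPolynomial ℤ) else 0
  map_zero' := by simp
  map_add' p q := by
    rw [AddMonoidAlgebra.coeff_add]
    exact Finsupp.sum_add_index' (fun j => by split <;> simp)
      (fun j c c' => by split <;> simp [AddMonoidAlgebra.single_add])

lemma piK_single (r : ℕ) (k : Fin r) (j : ℤ) (c : ℤ) :
    piK r k (AddMonoidAlgebra.single j c) =
      if j % (r : ℤ) = (k : ℤ) then AddMonoidAlgebra.single ((j - (k : ℤ)) / (r : ℤ)) c else 0 := by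
  simp only [piK, AddMonoidHom.coe_mk, ZeroHom.coe_mk]
  rw [AddMonoidAlgebra.coeff_single, Finsupp.sum_single_index]
  split <;> simp

lemma sum_sigma_piK (r : ℕ) (hr : 0 < r) (p : LaurentPolynomial ℤ) :
    ∑ k : Fin r, sigmaHom r (piK r k p) * T (k : ℤ) = p := by
  induction p using AddMonoidAlgebra.induction_linear with
  | zero => simp
  | add f g hf hg =>
      simp only [map_add, add_mul, Finset.sum_add_distrib, hf, hg]
  | single j c =>
      have hrz : (0 : ℤ) < (r : ℤ) := by exact_mod_cast hr
      have hnn : 0 ≤ j % (r : ℤ) := Int.emod_nonneg j hrz.ne'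
      have hlt : j % (r : ℤ) < (r : ℤ) := Int.emod_lt_of_pos j hrz
      set k0 : Fin r := ⟨(j % (r : ℤ)).toNat, by omega⟩ with hk0
      have hk0c : ((k0 : ℕ) : ℤ) = j % (r : ℤ) := Int.toNat_of_nonneg hnn
      rw [Finset.sum_eq_single k0]
      · rw [piK_single, if_pos hk0c.symm, sigmaHom_single,
          LaurentPolynomial.single_eq_C_mul_T, mul_assoc, ← LaurentPolynomial.T_add,
          ← LaurentPolynomial.single_eq_C_mul_T]
        congr 1
        have hdvd : (r : ℤ) ∣ j - (k0 : ℤ) := by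
          rw [hk0c]; exact Int.dvd_self_sub_of_emod_eq rfl
        rw [Int.mul_ediv_cancel' hdvd]; ring
      · intro k _ hk
        rw [piK_single, if_neg, map_zero, zero_mul]
        intro h
        exact hk (Fin.ext (by omega))
      · intro h; exact absurd (Finset.mem_univ k0) h

lemma piK_sigma_mul_T (r : ℕ) (hr : 0 < r) (k k' : Fin r) (q : LaurentPolynomial ℤ) :
    piK r k (sigmaHom r q * T (k' : ℤ)) = if k' = k then q else 0 := by
  induction q using AddMonoidAlgebra.induction_linear with
  | zero => split <;> simp
  | add f g hf hg =>
      rw [map_add, add_mul, map_add, hf, hg]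
      split <;> simp
  | single a c =>
      have hrz : (0 : ℤ) < (r : ℤ) := by exact_mod_cast hr
      rw [sigmaHom_single, LaurentPolynomial.single_eq_C_mul_T, mul_assoc,
        ← LaurentPolynomial.T_add, ← LaurentPolynomial.single_eq_C_mul_T, piK_single]
      have hmod : ((r : ℤ) * a + (k' : ℤ)) % (r : ℤ) = (k' : ℤ) := by
        rw [add_comm, Int.add_mul_emod_self_left]
        exact Int.emod_eq_of_lt (Int.ofNat_nonneg _) (by exact_mod_cast k'.2)
      rw [hmod]
      by_cases h : k' = k
      · subst h
        simp
        rw [Int.mul_ediv_cancel_left _ hrz.ne']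
        exact Or.inl rfl
      · rw [if_neg h, if_neg (by exact_mod_cast fun hh => h (Fin.ext (by omega)))]

open Polynomial in
lemma exists_rootsC (r : ℕ) (hr : 0 < r) (z : ℂˣ) :
    ∃ w : Fin r → ℂˣ, Function.Injective w ∧ ∀ u, (w u : ℂ) ^ r = (z : ℂ) := by
  have hζ : IsPrimitiveRoot (Complex.exp (2 * Real.pi * Complex.I / r)) r :=
    Complex.isPrimitiveRoot_exp r hr.ne'
  set ζ := Complex.exp (2 * Real.pi * Complex.I / r)
  have hζ0 : ζ ≠ 0 := Complex.exp_ne_zero _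
  have hw0 : ((z : ℂ) ^ ((r : ℂ)⁻¹)) ^ r = (z : ℂ) := Complex.cpow_nat_inv_pow _ hr.ne'
  set w0 : ℂ := (z : ℂ) ^ ((r : ℂ)⁻¹)
  have hw00 : w0 ≠ 0 := by
    intro h
    apply z.ne_zero
    rw [← hw0, h, zero_pow hr.ne']
  refine ⟨fun u => Units.mk0 (ζ ^ (u : ℕ) * w0) (mul_ne_zero (pow_ne_zero _ hζ0) hw00),
    ?_, ?_⟩
  · intro u u' h
    have h2 : ζ ^ (u : ℕ) * w0 = ζ ^ (u' : ℕ) * w0 := by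
      have := congrArg Units.val h
      simpa using this
    exact Fin.ext (hζ.pow_inj u.2 u'.2 (mul_right_cancel₀ hw00 h2))
  · intro u
    show (ζ ^ (u : ℕ) * w0) ^ r = (z : ℂ)
    rw [mul_pow, ← pow_mul, mul_comm (u : ℕ) r, pow_mul, hζ.pow_eq_one, one_pow, one_mul, hw0]

open Polynomial in
lemma prod_rootsC (r : ℕ) (hr : 0 < r) (z : ℂˣ) (w : Fin r → ℂˣ)
    (hinj : Function.Injective w) (hw : ∀ u, (w u : ℂ) ^ r = (z : ℂ)) (y : ℂ) :
    ∏ u, (y - (w u : ℂ)) = y ^ r - (z : ℂ) := by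
  have hinj' : Function.Injective (fun u => (w u : ℂ)) :=
    fun u u' h => hinj (Units.ext h)
  set P : ℂ[X] := ∏ u : Fin r, (X - Polynomial.C (w u : ℂ)) with hP
  have hPm : P.Monic := monic_prod_of_monic _ _ fun u _ => monic_X_sub_C _
  have hPdeg : P.natDegree = r := by
    rw [hP, natDegree_prod _ _ fun u _ => X_sub_C_ne_zero _]
    simp [natDegree_X_sub_C]
  set Q : ℂ[X] := X ^ r - Polynomial.C (z : ℂ) with hQ
  have hQm : Q.Monic := monic_X_pow_sub_C _ hr.ne'
  have hQdeg : Q.degree = r := degree_X_pow_sub_C hr _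
  have heq : Q = P := by
    rw [← sub_eq_zero]
    by_cases hd : Q - P = 0
    · exact hd
    · refine eq_zero_of_natDegree_lt_card_of_eval_eq_zero (Q - P) hinj' (fun u => ?_) ?_
      · rw [eval_sub]
        have e1 : Q.eval (w u : ℂ) = 0 := by
          rw [hQ]; simp [hw u]
        have e2 : P.eval (w u : ℂ) = 0 := by
          rw [hP, eval_prod]
          exact Finset.prod_eq_zero (Finset.mem_univ u) (by simp)
        rw [e1, e2, sub_zero]
      · rw [Fintype.card_fin]
        have h1 : P.degree = (r : ℕ) := by
          rw [degree_eq_natDegree hPm.ne_zero, hPdeg]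
        have h2 : (Q - P).degree < (r : ℕ) := by
          rw [← hQdeg]
          exact degree_sub_lt (hQdeg.trans h1.symm) hQm.ne_zero
            (hQm.leadingCoeff.trans hPm.leadingCoeff.symm)
        exact (natDegree_lt_iff_degree_lt hd).mpr h2
  simpa [hQ, hP, eval_prod] using congrArg (eval y) heq.symm


section Main

variable {n : ℕ} (r : ℕ)

/-- `φ : ℤ[s]^{nr} → ℤ[t]^n`. -/
noncomputable def phiMap (c : Fin (n * r) → LaurentPolynomial ℤ) :
    Fin n → LaurentPolynomial ℤ :=
  fun i => ∑ k : Fin r, sigmaHom r (c (finProdFinEquiv (i, k))) * T (k : ℤ)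

/-- `ψ : ℤ[t]^n → ℤ[s]^{nr}`, inverse of `φ`. -/
noncomputable def psiMap (v : Fin n → LaurentPolynomial ℤ) :
    Fin (n * r) → LaurentPolynomial ℤ :=
  fun a => piK r (finProdFinEquiv.symm a).2 (v (finProdFinEquiv.symm a).1)

lemma phi_psi (hr : 0 < r) (v : Fin n → LaurentPolynomial ℤ) :
    phiMap r (psiMap r v) = v := by
  funext i
  simp only [phiMap, psiMap, Equiv.symm_apply_apply]
  exact sum_sigma_piK r hr (v i)

lemma psi_phi (hr : 0 < r) (c : Fin (n * r) → LaurentPolynomial ℤ) :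
    psiMap r (phiMap r c) = c := by
  funext a
  simp only [phiMap, psiMap, map_sum, piK_sigma_mul_T r hr]
  rw [Finset.sum_ite_eq' Finset.univ ((finProdFinEquiv.symm a).2)
    (fun k => c (finProdFinEquiv ((finProdFinEquiv.symm a).1, k)))]
  rw [if_pos (Finset.mem_univ _), Prod.mk.eta, Equiv.apply_symm_apply]

/-- representative vectors `t^k e_i`. -/
noncomputable def repV (b : Fin (n * r)) : Fin n → LaurentPolynomial ℤ :=
  fun i => if i = (finProdFinEquiv.symm b).1 then T (((finProdFinEquiv.symm b).2 : ℕ) : ℤ) else 0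

lemma sum_sigma_repV (d : Fin (n * r) → LaurentPolynomial ℤ) :
    ∑ b, sigmaHom r (d b) • repV r b = phiMap r d := by
  funext i
  rw [Finset.sum_apply]
  rw [← Equiv.sum_comp (finProdFinEquiv : Fin n × Fin r ≃ Fin (n * r))
    (fun b => (sigmaHom r (d b) • repV r b) i)]
  rw [Fintype.sum_prod_type]
  simp only [Pi.smul_apply, repV, Equiv.symm_apply_apply, smul_eq_mul, mul_ite, mul_zero]
  rw [Finset.sum_comm]
  simp only [Finset.sum_ite_eq Finset.univ i]
  simp [phiMap]

variable (M : Matrix (Fin n) (Fin n) (LaurentPolynomial ℤ))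

/-- The presentation matrix over `ℤ[s,s⁻¹]`. -/
noncomputable def Mmat : Matrix (Fin (n * r)) (Fin (n * r)) (LaurentPolynomial ℤ) :=
  fun b a => psiMap r (M.mulVec (repV r b)) a

lemma phi_row (hr : 0 < r) (b : Fin (n * r)) :
    phiMap r (fun a => Mmat r M b a) = M.mulVec (repV r b) := by
  have := phi_psi r hr (M.mulVec (repV r b))
  exact this

lemma keyB (hr : 0 < r) (d : Fin (n * r) → LaurentPolynomial ℤ) :
    phiMap r (fun a => ∑ b, d b * Mmat r M b a) = M.mulVec (phiMap r d) := by
  have h1 : (fun a => ∑ b, d b * Mmat r M b a)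
      = ∑ b, d b • (fun a => Mmat r M b a) := by
    funext a; rw [Finset.sum_apply]; simp [smul_eq_mul]
  rw [h1]
  have h2 : phiMap r (∑ b, d b • (fun a => Mmat r M b a))
      = ∑ b, sigmaHom r (d b) • phiMap r (fun a => Mmat r M b a) := by
    funext i
    simp only [phiMap, Finset.sum_apply, Pi.smul_apply, smul_eq_mul, map_sum, map_mul,
      Finset.mul_sum, Finset.sum_mul]
    rw [Finset.sum_comm]
    simp [mul_assoc]
  rw [h2]
  simp only [phi_row r M hr]
  rw [← sum_sigma_repV]
  have h3 : ∑ b, sigmaHom r (d b) • M.mulVec (repV r b)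
      = M.mulVec (∑ b, sigmaHom r (d b) • repV r b) := by
    simp_rw [show ∀ v, M.mulVec v = Matrix.toLin' M v from
      fun v => (Matrix.toLin'_apply M v).symm, ← map_smul, ← map_sum]
  rw [← h3]

lemma sum_g_eq (c : Fin (n * r) → LaurentPolynomial ℤ) :
    ∑ a, sigmaHom r (c a) • (LinearMap.range (Matrix.toLin' M)).mkQ (repV r a)
      = (LinearMap.range (Matrix.toLin' M)).mkQ (phiMap r c) := by
  rw [← sum_sigma_repV, map_sum]
  simp only [map_smul]


lemma sum_ite_pull {β : Type*} [AddCommMonoid β] {r' : ℕ} (c : Prop) [Decidable c]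
    (f : Fin r' → β) : (∑ y : Fin r', if c then f y else 0) = if c then ∑ y, f y else 0 := by
  split <;> simp

lemma keyEval (hr : 0 < r) (z w : ℂˣ) (hw : w ^ r = z) (p : LaurentPolynomial ℤ) :
    ∑ k : Fin r, (w : ℂ) ^ (k : ℕ) * evalC z (piK r k p) = evalC w p := by
  conv_rhs => rw [← sum_sigma_piK r hr p]
  rw [map_sum]
  refine Finset.sum_congr rfl fun k _ => ?_
  rw [map_mul, evalC_sigmaHom, hw, evalC_T, zpow_natCast, mul_comm]

/-- The change-of-basis (Vandermonde-type) matrix. -/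
noncomputable def Qmat (w : Fin r → ℂˣ) : Matrix (Fin (n * r)) (Fin (n * r)) ℂ :=
  fun a b => if (finProdFinEquiv.symm a).1 = (finProdFinEquiv.symm b).1
    then (w (finProdFinEquiv.symm a).2 : ℂ) ^ ((finProdFinEquiv.symm b).2 : ℕ) else 0

lemma mulVec_repV (b : Fin (n * r)) (i : Fin n) :
    M.mulVec (repV r b) i
      = M i (finProdFinEquiv.symm b).1 * T (((finProdFinEquiv.symm b).2 : ℕ) : ℤ) := by
  simp only [Matrix.mulVec, dotProduct, repV, mul_ite, mul_zero]
  rw [Finset.sum_ite_eq' Finset.univ ((finProdFinEquiv.symm b).1)]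
  simp

lemma Mmat_apply' (b : Fin (n * r)) (i : Fin n) (k : Fin r) :
    Mmat r M b (finProdFinEquiv (i, k)) = piK r k (M.mulVec (repV r b) i) := by
  simp [Mmat, psiMap, Equiv.symm_apply_apply]

lemma conjMat (hr : 0 < r) (z : ℂˣ) (w : Fin r → ℂˣ) (hw : ∀ u, w u ^ r = z) :
    Qmat r w * ((Mmat r M).map (evalC z)).transpose
      = (Matrix.reindex finProdFinEquiv finProdFinEquiv
          (Matrix.blockDiagonal (fun u => M.map (evalC (w u))))) * Qmat r w := by
  ext a b
  rw [Matrix.mul_apply, Matrix.mul_apply]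
  rw [← Equiv.sum_comp (finProdFinEquiv : Fin n × Fin r ≃ Fin (n * r))]
  rw [show (∑ c : Fin (n * r),
        (Matrix.reindex finProdFinEquiv finProdFinEquiv
          (Matrix.blockDiagonal (fun u => M.map (evalC (w u))))) a c * Qmat r w c b)
      = ∑ p : Fin n × Fin r,
        (Matrix.reindex finProdFinEquiv finProdFinEquiv
          (Matrix.blockDiagonal (fun u => M.map (evalC (w u))))) a (finProdFinEquiv p)
          * Qmat r w (finProdFinEquiv p) b from
    (Equiv.sum_comp (finProdFinEquiv : Fin n × Fin r ≃ Fin (n * r)) _).symm]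
  -- LHS
  have hL : ∀ p : Fin n × Fin r,
      Qmat r w a (finProdFinEquiv p) * ((Mmat r M).map (evalC z)).transpose (finProdFinEquiv p) b
        = if (finProdFinEquiv.symm a).1 = p.1 then
            (w (finProdFinEquiv.symm a).2 : ℂ) ^ (p.2 : ℕ)
              * evalC z (piK r p.2 (M.mulVec (repV r b) p.1)) else 0 := by
    rintro ⟨i, k⟩
    simp only [Qmat, Matrix.transpose_apply, Matrix.map_apply, Equiv.symm_apply_apply,
      ite_mul, zero_mul]
    rw [Mmat_apply']
  simp only [hL]
  rw [Fintype.sum_prod_type]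
  simp only [sum_ite_pull]
  rw [Finset.sum_ite_eq Finset.univ ((finProdFinEquiv.symm a).1)
    (fun i => ∑ k : Fin r, (w (finProdFinEquiv.symm a).2 : ℂ) ^ (k : ℕ)
      * evalC z (piK r k (M.mulVec (repV r b) i)))]
  rw [if_pos (Finset.mem_univ _)]
  rw [keyEval r hr z _ (hw _)]
  rw [mulVec_repV, map_mul, evalC_T, zpow_natCast]
  -- RHS
  rw [Finset.sum_eq_single ((finProdFinEquiv.symm b).1, (finProdFinEquiv.symm a).2)]
  · simp only [Matrix.reindex_apply, Matrix.submatrix_apply, Equiv.symm_apply_apply,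
      Matrix.blockDiagonal_apply, Qmat, Matrix.map_apply]
    simp
  · rintro ⟨i', u'⟩ _ hne
    simp only [Matrix.reindex_apply, Matrix.submatrix_apply, Equiv.symm_apply_apply,
      Matrix.blockDiagonal_apply, Qmat, Matrix.map_apply]
    by_cases h1 : (finProdFinEquiv.symm a).2 = u'
    · by_cases h2 : i' = (finProdFinEquiv.symm b).1
      · exact absurd (Prod.ext (h2.symm ▸ rfl) h1.symm) hne
      · rw [if_neg h2, mul_zero]
    · rw [if_neg h1, zero_mul]
  · intro h; exact absurd (Finset.mem_univ _) h

lemma Qmat_det_ne_zero (hr : 0 < r) (w : Fin r → ℂˣ)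
    (hinj : Function.Injective fun u => (w u : ℂ)) :
    (Qmat (n := n) r w).det ≠ 0 := by
  intro h
  obtain ⟨v, hv0, hv⟩ := (Matrix.exists_mulVec_eq_zero_iff).mpr h
  apply hv0
  have key : ∀ (i : Fin n) (u : Fin r),
      ∑ k : Fin r, (w u : ℂ) ^ (k : ℕ) * v (finProdFinEquiv (i, k)) = 0 := by
    intro i u
    have := congrFun hv (finProdFinEquiv (i, u))
    rw [Matrix.mulVec, dotProduct,
      ← Equiv.sum_comp (finProdFinEquiv : Fin n × Fin r ≃ Fin (n * r))] at this
    simp only [Qmat, Equiv.symm_apply_apply, ite_mul, zero_mul] at this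
    rw [Fintype.sum_prod_type] at this
    simp only [sum_ite_pull] at this
    rw [Finset.sum_ite_eq Finset.univ i
      (fun i' => ∑ k : Fin r, (w u : ℂ) ^ (k : ℕ) * v (finProdFinEquiv (i', k))),
      if_pos (Finset.mem_univ _)] at this
    exact this
  have hpoly : ∀ i : Fin n,
      (∑ k : Fin r, Polynomial.monomial (k : ℕ) (v (finProdFinEquiv (i, k)))) = 0 := by
    intro i
    refine Polynomial.eq_zero_of_natDegree_lt_card_of_eval_eq_zero _ hinj (fun u => ?_) ?_
    · rw [Polynomial.eval_finset_sum]
      simp only [Polynomial.eval_monomial]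
      rw [← key i u]
      exact Finset.sum_congr rfl fun k _ => mul_comm _ _
    · rw [Fintype.card_fin]
      refine lt_of_le_of_lt (Polynomial.natDegree_sum_le_of_forall_le _ _
        (fun k _ => (Polynomial.natDegree_monomial_le _).trans
          (Nat.le_sub_one_of_lt k.2))) ?_
      omega
  funext a
  have := congrArg (fun p => Polynomial.coeff p ((finProdFinEquiv.symm a).2 : ℕ))
    (hpoly (finProdFinEquiv.symm a).1)
  simp only [Polynomial.finset_sum_coeff, Polynomial.coeff_monomial,
    Polynomial.coeff_zero] at this
  rw [Finset.sum_eq_single ((finProdFinEquiv.symm a).2)] at this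
  · rw [if_pos rfl] at this
    rw [Prod.mk.eta, Equiv.apply_symm_apply] at this
    exact this
  · intro k _ hk
    rw [if_neg (by exact fun hh => hk (Fin.ext hh))]
  · intro h'; exact absurd (Finset.mem_univ _) h'

lemma detPart {m : ℕ} (hr : 0 < r) (c₀ : ℂ) (α : Fin m → ℂ)
    (hfact : ∀ z : ℂˣ, evalC z M.det = c₀ * ∏ j, ((z : ℂ) - α j)) (z : ℂˣ) :
    evalC z (Mmat r M).det
      = (-1 : ℂ) ^ ((r + 1) * m) * c₀ ^ r * ∏ j, ((z : ℂ) - α j ^ r) := by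
  obtain ⟨w, hinj, hw⟩ := exists_rootsC r hr z
  have hinj' : Function.Injective fun u => (w u : ℂ) := fun u u' h => hinj (Units.ext h)
  have hwu : ∀ u, w u ^ r = z := fun u => Units.ext (by simpa using hw u)
  have hconj := conjMat r M hr z w hwu
  have hQ := Qmat_det_ne_zero (n := n) r hr w hinj'
  have hdet : ((Mmat r M).map (evalC z)).transpose.det
      = (Matrix.reindex finProdFinEquiv finProdFinEquiv
          (Matrix.blockDiagonal (fun u => M.map (evalC (w u))))).det := by
    have := congrArg Matrix.det hconj
    rw [Matrix.det_mul, Matrix.det_mul] at this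
    apply mul_right_cancel₀ hQ
    rw [mul_comm _ ((Qmat (n := n) r w).det), this]
  have h1 : evalC z ((Mmat r M).det) = ((Mmat r M).map (evalC z)).transpose.det := by
    rw [Matrix.det_transpose, AlgHom.map_det (evalC z) (Mmat r M)]
    rfl
  rw [h1, hdet, Matrix.det_reindex_self, Matrix.det_blockDiagonal]
  have h2 : ∀ u, (M.map (evalC (w u))).det = c₀ * ∏ j, ((w u : ℂ) - α j) := by
    intro u
    rw [show M.map ⇑(evalC (w u)) = (evalC (w u)).mapMatrix M from rfl,
      ← AlgHom.map_det]
    exact hfact (w u)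
  simp only [h2]
  rw [Finset.prod_mul_distrib, Finset.prod_const, Finset.card_univ, Fintype.card_fin,
    Finset.prod_comm]
  have hj : ∀ j, ∏ u : Fin r, ((w u : ℂ) - α j)
      = (-1 : ℂ) ^ (r + 1) * ((z : ℂ) - α j ^ r) := by
    intro j
    have hp := prod_rootsC r hr z w hinj hw (α j)
    calc ∏ u : Fin r, ((w u : ℂ) - α j)
        = ∏ u : Fin r, ((-1 : ℂ) * (α j - (w u : ℂ))) := by
          refine Finset.prod_congr rfl fun u _ => by ring
      _ = (-1 : ℂ) ^ r * ∏ u : Fin r, (α j - (w u : ℂ)) := by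
          rw [Finset.prod_mul_distrib, Finset.prod_const, Finset.card_univ, Fintype.card_fin]
      _ = (-1 : ℂ) ^ r * (α j ^ r - (z : ℂ)) := by rw [hp]
      _ = (-1 : ℂ) ^ (r + 1) * ((z : ℂ) - α j ^ r) := by ring
  simp only [hj]
  rw [Finset.prod_mul_distrib, Finset.prod_const, Finset.card_univ, Fintype.card_fin,
    ← pow_mul]
  ring

end Main

open Polynomial in
/-- Let `A` be a module over `ℤ[t,t⁻¹]` presented by a square matrix `M` whose
determinant factors over an algebraic closure as `Δ(t) = c₀ ∏ⱼ (t − αⱼ)`.  Regard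
`A` as a `ℤ[s,s⁻¹]`-module via `s = t^r` (so `s`-scalar multiplication by `q` is
`t`-scalar multiplication by `σ(q)`, where `σ : s ↦ t^r`).  Then `A` has a square
presentation over `ℤ[s,s⁻¹]` whose determinant is `c₀^r ∏ⱼ (s − αⱼ^r)` up to a
unit `± s^k`. -/
theorem stmt6 {n m : ℕ} (r : ℕ) (hr : 0 < r)
    (M : Matrix (Fin n) (Fin n) (LaurentPolynomial ℤ))
    (c₀ : ℂ) (α : Fin m → ℂ)
    (hfact : ∀ z : ℂˣ, evalC z M.det = c₀ * ∏ j, ((z : ℂ) - α j)) :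
    ∃ (N : ℕ) (M' : Matrix (Fin N) (Fin N) (LaurentPolynomial ℤ))
      (g : Fin N → ((Fin n → LaurentPolynomial ℤ) ⧸
        LinearMap.range (Matrix.toLin' M))),
      (∀ a : (Fin n → LaurentPolynomial ℤ) ⧸ LinearMap.range (Matrix.toLin' M),
        ∃ c : Fin N → LaurentPolynomial ℤ, a = ∑ i, sigmaHom r (c i) • g i) ∧
      (∀ c : Fin N → LaurentPolynomial ℤ,
        (∑ i, sigmaHom r (c i) • g i = 0) ↔
          ∃ d : Fin N → LaurentPolynomial ℤ, ∀ i, c i = ∑ j, d j * M' j i) ∧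
      (∃ (ε : ℤˣ) (k : ℤ), ∀ z : ℂˣ,
        evalC z M'.det = (ε : ℤ) * (z : ℂ) ^ k * c₀ ^ r * ∏ j, ((z : ℂ) - α j ^ r)) := by
  classical
  refine ⟨n * r, Mmat r M, fun a => (LinearMap.range (Matrix.toLin' M)).mkQ (repV r a),
    ?_, ?_, ?_⟩
  · intro a
    obtain ⟨v, rfl⟩ := (LinearMap.range (Matrix.toLin' M)).mkQ_surjective a
    refine ⟨psiMap r v, ?_⟩
    rw [sum_g_eq, phi_psi r hr]
  · intro c
    rw [sum_g_eq]
    rw [Submodule.mkQ_apply, Submodule.Quotient.mk_eq_zero]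
    constructor
    · rintro ⟨v, hv⟩
      refine ⟨psiMap r v, ?_⟩
      have h1 : phiMap r (fun a => ∑ b, psiMap r v b * Mmat r M b a)
          = phiMap r c := by
        rw [keyB r M hr, phi_psi r hr, ← Matrix.toLin'_apply, hv]
      have h2 := congrArg (psiMap r) h1
      rw [psi_phi r hr, psi_phi r hr] at h2
      intro i
      exact (congrFun h2 i).symm
    · rintro ⟨d, hd⟩
      have hc : c = fun a => ∑ b, d b * Mmat r M b a := funext hd
      rw [hc, keyB r M hr, ← Matrix.toLin'_apply]
      exact ⟨phiMap r d, rfl⟩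
  · refine ⟨(-1 : ℤˣ) ^ ((r + 1) * m), 0, fun z => ?_⟩
    rw [detPart r M hr c₀ α hfact z]
    have hcast : ((((-1 : ℤˣ) ^ ((r + 1) * m) : ℤˣ) : ℤ) : ℂ)
        = (-1 : ℂ) ^ ((r + 1) * m) := by
      push_cast
      simp
    rw [hcast, zpow_zero]
    ring
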